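/- arXiv:0707.0095 — 3 statements merged into one kernel-verified Lean document; each statement's English description precedes it below -/
import Mathlib

section
/- Let μ be a non-degenerate probability measure on ℝ (i.e. μ is not a Dirac mass at a single point) with inverse distribution function G. Then there exists at least one p ∈ (0,1) such that β⁺(p,μ) := inf_{t∈(0,1)} ( G(1−p+pt) − G((1−p)t) ) > 0. -/
open MeasureTheory Set

/-- The inverse distribution function `G(t) = inf {u : μ((-∞,u]) ≥ t}`. -/
noncomputable def invCDF (μ : Measure ℝ) (t : ℝ) : ℝ :=
  sInf {u : ℝ | t ≤ (μ (Iic u)).toReal}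

/-- `β⁺(p,μ) = inf_{t ∈ (0,1)} (G(1-p+pt) - G((1-p)t))`. -/
noncomputable def betaPlus (μ : Measure ℝ) (p : ℝ) : ℝ :=
  ⨅ t : Ioo (0:ℝ) 1, (invCDF μ (1 - p + p * t.1) - invCDF μ ((1 - p) * t.1))

/-!
If the distribution function only took the values `0` and `1`, `μ` would be the Dirac mass at
`G(1/2)`. So some `F(x)` lies in `(0,1)`, which makes the quantile function `G` non-constant on
`(0,1)`. Hence `G` crosses some level `v` at a point `c ∈ (0,1)`: `G ≤ v` on `(0,c)`, `G > v`
on `(c,1)`, and `G α < v` for some `α < c`. Take `p = 1 - c`, so that `Y₁(t) = G(ct)` and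
`Y₂(t) = G(c + pt)` sample `G` on opposite sides of `c`. Splitting at `θ = α / c`: for `t ≤ θ`,
`Y₁(t) ≤ G α < v < Y₂(t)`; for `t ≥ θ`, `Y₁(t) ≤ v < G(c + pθ) ≤ Y₂(t)`. Either way `δ⁺_p(t)`
is bounded below by a positive constant independent of `t`.
-/

open Filter ProbabilityTheory
open scoped Topology

lemma MonotoneOn.exists_crossing {G : ℝ → ℝ} (hG : MonotoneOn G (Ioo 0 1)) {a b v : ℝ}
    (ha : a ∈ Ioo 0 1) (hb : b ∈ Ioo 0 1) (hav : G a ≤ v) (hvb : v < G b) :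
    ∃ c ∈ Icc a b, (∀ s ∈ Ioo 0 c, G s ≤ v) ∧ ∀ s ∈ Ioo c 1, v < G s := by
  set A := {s ∈ Ioo (0 : ℝ) 1 | G s ≤ v}
  have haA : a ∈ A := ⟨ha, hav⟩
  have hA_le : ∀ s ∈ A, s ≤ b := fun s hs =>
    le_of_not_gt fun hbs => (hvb.trans_le (hG hb hs.1 hbs.le)).not_ge hs.2
  have hbdd : BddAbove A := ⟨b, hA_le⟩
  have ha_le : a ≤ sSup A := le_csSup hbdd haA
  refine ⟨sSup A, ⟨ha_le, csSup_le ⟨a, haA⟩ hA_le⟩, fun s hs => ?_, fun s hs => ?_⟩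
  · obtain ⟨s', hs'A, hss'⟩ := exists_lt_of_lt_csSup ⟨a, haA⟩ hs.2
    exact (hG ⟨hs.1, hss'.trans hs'A.1.2⟩ hs'A.1 hss'.le).trans hs'A.2
  · by_contra! hsv
    exact hs.1.not_ge (le_csSup hbdd ⟨⟨ha.1.trans (ha_le.trans_lt hs.1), hs.2⟩, hsv⟩)

lemma MonotoneOn.exists_forall_le_sub_of_crossing {G : ℝ → ℝ} (hG : MonotoneOn G (Ioo 0 1))
    {c α v : ℝ} (hc : c ∈ Ioo 0 1) (hα : α ∈ Ioo 0 c) (hαv : G α < v)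
    (hlow : ∀ s ∈ Ioo 0 c, G s ≤ v) (hhigh : ∀ s ∈ Ioo c 1, v < G s) :
    ∃ ε > 0, ∀ t ∈ Ioo 0 1, ε ≤ G (c + (1 - c) * t) - G (c * t) := by
  obtain ⟨hc₀, hc₁⟩ := hc
  have hlower : ∀ t ∈ Ioo (0 : ℝ) 1, c * t ∈ Ioo 0 c := fun t ht =>
    ⟨mul_pos hc₀ ht.1, mul_lt_of_lt_one_right hc₀ ht.2⟩
  have hupper : ∀ t ∈ Ioo (0 : ℝ) 1, c + (1 - c) * t ∈ Ioo c 1 := fun t ht =>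
    ⟨by nlinarith [ht.1], by nlinarith [ht.2]⟩
  have hα' : α ∈ Ioo (0 : ℝ) 1 := ⟨hα.1, hα.2.trans hc₁⟩
  set θ := α / c
  have hθ : θ ∈ Ioo 0 1 := ⟨div_pos hα.1 hc₀, (div_lt_one hc₀).2 hα.2⟩
  have hcθ : c * θ = α := mul_div_cancel₀ α hc₀.ne'
  set β := c + (1 - c) * θ
  have hβ := hupper θ hθ
  refine ⟨min (v - G α) (G β - v), lt_min (by linarith) (by linarith [hhigh β hβ]),
    fun t ht => ?_⟩
  rcases le_total t θ with htθ | hθt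
  · have hlt : G (c * t) ≤ G α :=
      hG ⟨(hlower t ht).1, (hlower t ht).2.trans hc₁⟩ hα' (hcθ ▸ by gcongr)
    linarith [hhigh _ (hupper t ht), min_le_left (v - G α) (G β - v)]
  · have hle : G β ≤ G (c + (1 - c) * t) :=
      hG ⟨hc₀.trans hβ.1, hβ.2⟩ ⟨hc₀.trans (hupper t ht).1, (hupper t ht).2⟩
        (by gcongr)
    linarith [hlow _ (hlower t ht), min_le_right (v - G α) (G β - v)]

lemma MonotoneOn.exists_forall_le_sub {G : ℝ → ℝ} (hG : MonotoneOn G (Ioo 0 1)) {a b : ℝ}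
    (ha : a ∈ Ioo 0 1) (hb : b ∈ Ioo 0 1) (hab : G a < G b) :
    ∃ c ∈ Ioo (0 : ℝ) 1, ∃ ε > 0, ∀ t ∈ Ioo 0 1, ε ≤ G (c + (1 - c) * t) - G (c * t) := by
  obtain ⟨v, hav, hvb⟩ := exists_between hab
  obtain ⟨c, ⟨hac, hcb⟩, hlow, hhigh⟩ := hG.exists_crossing ha hb hav.le hvb
  have hc : c ∈ Ioo (0 : ℝ) 1 := ⟨ha.1.trans_le hac, hcb.trans_lt hb.2⟩
  have hα : a / 2 ∈ Ioo 0 c := ⟨half_pos ha.1, (half_lt_self ha.1).trans_le hac⟩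
  have hαv : G (a / 2) < v :=
    (hG ⟨half_pos ha.1, (half_lt_self ha.1).trans ha.2⟩ ha (half_le_self ha.1.le)).trans_lt
      hav
  exact ⟨c, hc, hG.exists_forall_le_sub_of_crossing hc hα hαv hlow hhigh⟩

section InvCDF

variable (μ : Measure ℝ) {t x : ℝ}

lemma bddBelow_setOf_le_cdf (ht : 0 < t) : BddBelow {u : ℝ | t ≤ cdf μ u} := by
  obtain ⟨M, hM⟩ := ((tendsto_cdf_atBot μ).eventually_lt_const ht).exists
  exact ⟨M, fun u hu => le_of_lt <| (monotone_cdf μ).reflect_lt (hM.trans_le hu)⟩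

lemma nonempty_setOf_le_cdf (ht : t < 1) : {u : ℝ | t ≤ cdf μ u}.Nonempty :=
  (((tendsto_cdf_atTop μ).eventually_const_lt ht).exists).imp fun _ => le_of_lt

variable [IsProbabilityMeasure μ]

lemma invCDF_eq_sInf_cdf (t : ℝ) : invCDF μ t = sInf {u : ℝ | t ≤ cdf μ u} := by
  simp [invCDF, cdf_eq_real, measureReal_def]

lemma le_cdf_invCDF (ht : t < 1) : t ≤ cdf μ (invCDF μ t) := by
  rw [invCDF_eq_sInf_cdf]
  set m := sInf {u : ℝ | t ≤ cdf μ u}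
  have hright : Tendsto (cdf μ) (𝓝[>] m) (𝓝 (cdf μ m)) :=
    ((cdf μ).right_continuous m).mono Ioi_subset_Ici_self
  refine ge_of_tendsto hright (eventually_nhdsWithin_of_forall fun y hy => ?_)
  obtain ⟨u, hu, huy⟩ := exists_lt_of_csInf_lt (nonempty_setOf_le_cdf μ ht) hy
  exact hu.trans (monotone_cdf μ huy.le)

lemma invCDF_le_iff (ht₀ : 0 < t) (ht₁ : t < 1) : invCDF μ t ≤ x ↔ t ≤ cdf μ x :=
  ⟨fun h => (le_cdf_invCDF μ ht₁).trans (monotone_cdf μ h),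
    fun h => (invCDF_eq_sInf_cdf μ t).trans_le (csInf_le (bddBelow_setOf_le_cdf μ ht₀) h)⟩

lemma monotoneOn_invCDF : MonotoneOn (invCDF μ) (Ioo 0 1) := fun _ hs _ ht hst =>
  (invCDF_le_iff μ hs.1 hs.2).2 <| hst.trans (le_cdf_invCDF μ ht.2)

lemma eq_dirac_of_forall_cdf_mem (h : ∀ x, cdf μ x = 0 ∨ cdf μ x = 1) :
    μ = Measure.dirac (invCDF μ (1 / 2)) := by
  refine Measure.eq_of_cdf _ _ (StieltjesFunction.ext fun x => ?_)
  rw [cdf_eq_real (Measure.dirac _), measureReal_def, Measure.dirac_apply' _ measurableSet_Iic]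
  by_cases hx : invCDF μ (1 / 2) ≤ x
  · have hhalf := (invCDF_le_iff μ (by norm_num) (by norm_num)).1 hx
    rcases h x with h0 | h1
    · linarith
    · rw [h1, indicator_of_mem (mem_Iic.2 hx), Pi.one_apply, ENNReal.toReal_one]
  · have hhalf := mt (invCDF_le_iff μ (by norm_num) (by norm_num)).2 hx
    rcases h x with h0 | h1
    · rw [h0, indicator_of_notMem (mt mem_Iic.1 hx), ENNReal.toReal_zero]
    · linarith

lemma exists_cdf_mem_Ioo (hnd : ∀ x : ℝ, μ ≠ Measure.dirac x) :
    ∃ x, cdf μ x ∈ Ioo 0 1 := by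
  by_contra! h
  refine hnd _ (eq_dirac_of_forall_cdf_mem μ fun x => ?_)
  rcases (cdf_nonneg μ x).eq_or_lt with h0 | h0
  · exact Or.inl h0.symm
  rcases (cdf_le_one μ x).eq_or_lt with h1 | h1
  · exact Or.inr h1
  · exact (h x ⟨h0, h1⟩).elim

lemma exists_invCDF_lt (hnd : ∀ x : ℝ, μ ≠ Measure.dirac x) :
    ∃ a ∈ Ioo (0 : ℝ) 1, ∃ b ∈ Ioo (0 : ℝ) 1, invCDF μ a < invCDF μ b := by
  obtain ⟨x, hx₀, hx₁⟩ := exists_cdf_mem_Ioo μ hnd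
  have hb : (1 + cdf μ x) / 2 ∈ Ioo (0 : ℝ) 1 := ⟨by linarith, by linarith⟩
  refine ⟨cdf μ x, ⟨hx₀, hx₁⟩, _, hb, ?_⟩
  calc invCDF μ (cdf μ x) ≤ x := (invCDF_le_iff μ hx₀ hx₁).2 le_rfl
    _ < invCDF μ ((1 + cdf μ x) / 2) :=
      not_le.1 fun h => by linarith [(invCDF_le_iff μ hb.1 hb.2).1 h]

end InvCDF

/-- For any non-degenerate probability measure `μ` on `ℝ` there exists `p ∈ (0,1)`
with `β⁺(p,μ) > 0`. -/
theorem exists_betaPlus_pos (μ : Measure ℝ) [IsProbabilityMeasure μ]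
    (hnd : ∀ x : ℝ, μ ≠ Measure.dirac x) :
    ∃ p ∈ Ioo (0:ℝ) 1, 0 < betaPlus μ p := by
  obtain ⟨a, ha, b, hb, hab⟩ := exists_invCDF_lt μ hnd
  obtain ⟨c, hc, ε, hε, hgap⟩ := (monotoneOn_invCDF μ).exists_forall_le_sub ha hb hab
  have : Nonempty (Ioo (0 : ℝ) 1) := ⟨⟨a, ha⟩⟩
  refine ⟨1 - c, ⟨sub_pos.2 hc.2, sub_lt_self 1 hc.1⟩, hε.trans_le (le_ciInf fun t => ?_)⟩
  simpa only [sub_sub_cancel] using hgap t t.2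
end

section
/- Let μ be a probability measure on ℝ with distribution function F and inverse distribution function G, and let p ∈ (0,1). Let F₁⁺ and F₂⁺ denote the distribution functions of the pushforwards of Lebesgue measure on (0,1) under the maps t ↦ G((1−p)t) and t ↦ G(1−p+pt), respectively; i.e. F₁⁺(x) = Leb{ t ∈ (0,1) : G((1−p)t) ≤ x } and F₂⁺(x) = Leb{ t ∈ (0,1) : G(1−p+pt) ≤ x }. Then for every x ∈ ℝ: F₁⁺(x) = (1/(1−p))·min{ F(x), 1−p } and F₂⁺(x) = (1/p)·max{ F(x) + p − 1, 0 }. -/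
/-!
For `t ∈ (0,1)` the quantile function is the lower adjoint of the distribution function:
`G(t) ≤ x ↔ t ≤ F(x)`, by right-continuity of `F`. Since both affine maps `t ↦ (1-p)t` and
`t ↦ 1-p+pt` send `(0,1)` into `(0,1)`, each set `{t ∈ (0,1) : G(a + bt) ≤ x}` is the interval
`(0,1) ∩ (-∞, (F(x) - a)/b]`, whose length is the clamped affine expression of the statement.
-/

open MeasureTheory Set

open ProbabilityTheory Filter

lemma StieltjesFunction.sInf_le_iff (f : StieltjesFunction ℝ) {t : ℝ}
    (hne : {u | t ≤ f u}.Nonempty) (hbdd : BddBelow {u | t ≤ f u}) (x : ℝ) :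
    sInf {u | t ≤ f u} ≤ x ↔ t ≤ f x := by
  refine ⟨fun h ↦ ?_, fun h ↦ csInf_le hbdd h⟩
  have le_of_gt_x : ∀ y, x < y → t ≤ f y := fun y hy ↦ by
    obtain ⟨u, hu, huy⟩ := exists_lt_of_csInf_lt hne (h.trans_lt hy)
    exact hu.trans (f.mono huy.le)
  exact ge_of_tendsto ((f.right_continuous x).mono Ioi_subset_Ici_self)
    (eventually_nhdsWithin_of_forall le_of_gt_x)

lemma invCDF_le_iff_s11 (μ : Measure ℝ) [IsProbabilityMeasure μ] {t : ℝ} (ht : t ∈ Ioo 0 1)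
    (x : ℝ) : invCDF μ t ≤ x ↔ t ≤ (μ (Iic x)).toReal := by
  have toReal_eq_cdf : ∀ u, (μ (Iic u)).toReal = cdf μ u := fun u ↦ by
    rw [cdf_eq_real, measureReal_def]
  simp_rw [invCDF, toReal_eq_cdf]
  refine (cdf μ).sInf_le_iff ((tendsto_cdf_atTop μ).eventually_const_le ht.2).exists ?_ x
  obtain ⟨u₀, hu₀⟩ := ((tendsto_cdf_atBot μ).eventually_lt_const ht.1).exists
  refine ⟨u₀, fun u (hu : t ≤ cdf μ u) ↦ le_of_not_gt fun hlt ↦ ?_⟩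
  linarith [monotone_cdf μ hlt.le]

lemma volume_Ioo_inter_Iic (a b c : ℝ) :
    volume (Ioo a b ∩ Iic c) = ENNReal.ofReal (min b c - a) := by
  rw [measure_congr ((ae_eq_refl (Ioo a b)).inter Iio_ae_eq_Iic.symm), Ioo_inter_Iio,
    Real.volume_Ioo]

lemma toReal_volume_setOf_invCDF_affine_le (μ : Measure ℝ) [IsProbabilityMeasure μ]
    {a b : ℝ} (ha : 0 ≤ a) (hb : 0 < b) (hab : a + b ≤ 1) (x : ℝ) :
    (volume {t ∈ Ioo (0:ℝ) 1 | invCDF μ (a + b * t) ≤ x}).toReal =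
      max (min b ((μ (Iic x)).toReal - a)) 0 / b := by
  have preimage_eq : {t ∈ Ioo (0:ℝ) 1 | invCDF μ (a + b * t) ≤ x} =
      Ioo 0 1 ∩ Iic (((μ (Iic x)).toReal - a) / b) := by
    ext t
    simp only [mem_ofPred_eq, mem_inter_iff, mem_Iic, and_congr_right_iff]
    intro ht
    rw [invCDF_le_iff_s11 μ ⟨by nlinarith [ht.1], by nlinarith [ht.2]⟩, le_div_iff₀ hb]
    constructor <;> intro h <;> linarith
  rw [preimage_eq, volume_Ioo_inter_Iic, sub_zero, ENNReal.toReal_ofReal',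
    ← max_div_div_right hb.le, zero_div, ← min_div_div_right hb.le, div_self hb.ne']

/-- The distribution functions of the marginals of the "chasing Pac-Men" decomposition:
`F₁⁺(x) = Leb{t ∈ (0,1) : G((1-p)t) ≤ x} = (1/(1-p)) min(F(x), 1-p)` and
`F₂⁺(x) = Leb{t ∈ (0,1) : G(1-p+pt) ≤ x} = (1/p) max(F(x)+p-1, 0)`. -/
theorem pacman_marginal_cdfs (μ : Measure ℝ) [IsProbabilityMeasure μ]
    (p : ℝ) (hp : p ∈ Ioo (0:ℝ) 1) :
    ∀ x : ℝ,
      (volume {t ∈ Ioo (0:ℝ) 1 | invCDF μ ((1 - p) * t) ≤ x}).toReal =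
        (1 / (1 - p)) * min ((μ (Iic x)).toReal) (1 - p) ∧
      (volume {t ∈ Ioo (0:ℝ) 1 | invCDF μ (1 - p + p * t) ≤ x}).toReal =
        (1 / p) * max ((μ (Iic x)).toReal + p - 1) 0 := by
  obtain ⟨hp0, hp1⟩ := hp
  intro x
  set F := (μ (Iic x)).toReal
  have hF0 : 0 ≤ F := ENNReal.toReal_nonneg
  have hF1 : F ≤ 1 := ENNReal.toReal_le_of_le_ofReal zero_le_one (by simpa using prob_le_one)
  have lower := toReal_volume_setOf_invCDF_affine_le μ le_rfl (sub_pos.2 hp1) (by linarith) x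
  have upper := toReal_volume_setOf_invCDF_affine_le μ (sub_nonneg.2 hp1.le) hp0 (by linarith) x
  simp only [zero_add, sub_zero] at lower
  rw [lower, upper, max_eq_left (le_min (by linarith) hF0), min_comm,
    min_eq_right (by linarith : F - (1 - p) ≤ p), sub_sub_eq_add_sub]
  constructor <;> ring
end

section
/- Let N be a positive integer, p ∈ (0,1), and let η₁,…,η_N be independent identically distributed Bernoulli random variables with P(η_j = 1) = p and P(η_j = 0) = 1−p. Then for any antichain A ⊆ {0,1}^N with respect to the coordinatewise partial order, P( (η₁,…,η_N) ∈ A ) ≤ 2√2 / ( √(p(1−p)) · √N ). Equivalently, Σ_{η ∈ A} p^{|η|} (1−p)^{N−|η|} ≤ 2√2 / ( √(p(1−p)) · √N ). -/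
/-! By the LYM inequality the weight of an antichain is at most the largest binomial
probability `b = C(N,k) p^k q^(N-k)`, so it suffices to show `b ≤ 2 / √v` with `v = Npq`.
Far from the mean, `|k - Np| ≥ v / 2`, Chebyshev's inequality gives `b ≤ 4 / v`, hence
`b ^ 2 ≤ b ≤ 4 / v`. Near the mean, `k ≥ Np / 2` and `N - k ≥ Nq / 2`, and Stirling's bounds on
the factorials give `b ≤ (e / 2π) √(N / (k (N - k))) ≤ e / (π √v)`. -/

open Finset Real Nat

theorem Real.pow_le_pow_mul_exp_sub (n : ℕ) {a : ℝ} (ha : 0 ≤ a) :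
    a ^ n ≤ n ^ n * exp (a - n) := by
  rcases eq_or_ne n 0 with rfl | hn
  · simpa using one_le_exp ha
  have hn' : (0 : ℝ) < n := by positivity
  have h : a / n ≤ exp (a / n - 1) := by linarith [add_one_le_exp (a / n - 1)]
  calc a ^ n = n ^ n * (a / n) ^ n := by rw [div_pow, mul_div_cancel₀ _ (by positivity)]
    _ ≤ n ^ n * exp (a / n - 1) ^ n := by gcongr
    _ = n ^ n * exp (a - n) := by rw [← exp_nat_mul]; field_simp

theorem pow_mul_pow_le_of_add_eq_one (k m : ℕ) {p q : ℝ} (hp : 0 ≤ p) (hq : 0 ≤ q)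
    (hpq : p + q = 1) : p ^ k * q ^ m * (k + m) ^ (k + m) ≤ k ^ k * m ^ m := by
  have hk := pow_le_pow_mul_exp_sub k (mul_nonneg (by positivity : (0 : ℝ) ≤ k + m) hp)
  have hm := pow_le_pow_mul_exp_sub m (mul_nonneg (by positivity : (0 : ℝ) ≤ k + m) hq)
  have h0 : (k + m) * p - k + ((k + m) * q - m) = 0 := by linear_combination (k + m : ℝ) * hpq
  calc p ^ k * q ^ m * (k + m) ^ (k + m) = ((k + m) * p) ^ k * ((k + m) * q) ^ m := by
        rw [pow_add, mul_pow, mul_pow]; ring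
    _ ≤ k ^ k * exp ((k + m) * p - k) * (m ^ m * exp ((k + m) * q - m)) := by gcongr
    _ = k ^ k * m ^ m := by rw [mul_mul_mul_comm, ← exp_add, h0, exp_zero, mul_one]

theorem Stirling.factorial_le_exp_one_mul_sqrt_mul_pow (n : ℕ) (hn : n ≠ 0) :
    (n ! : ℝ) ≤ exp 1 * √n * (n / exp 1) ^ n := by
  have h : stirlingSeq n ≤ exp 1 / √2 := by
    obtain ⟨n, rfl⟩ := exists_eq_succ_of_ne_zero hn
    rw [← stirlingSeq_one]
    exact stirlingSeq'_antitone (Nat.zero_le n)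
  rw [stirlingSeq, div_le_iff₀ (by positivity)] at h
  calc (n ! : ℝ) ≤ exp 1 / √2 * (√(2 * n) * (n / exp 1) ^ n) := h
    _ = exp 1 * √n * (n / exp 1) ^ n := by
      rw [sqrt_mul zero_le_two]; field_simp

theorem Nat.cast_add_choose_le (k m : ℕ) (hk : k ≠ 0) (hm : m ≠ 0) :
    ((k + m).choose k : ℝ) ≤
      exp 1 / (2 * π) * √((k + m) / (k * m)) * ((k + m) ^ (k + m) / (k ^ k * m ^ m)) := by
  have hfac : ((k + m).choose k : ℝ) = (k + m)! / (k ! * m !) := by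
    rw [Nat.cast_choose ℝ (Nat.le_add_right k m), Nat.add_sub_cancel_left]
  have hlow :
      √(2 * π * k) * (k / exp 1) ^ k * (√(2 * π * m) * (m / exp 1) ^ m) ≤ k ! * m ! :=
    mul_le_mul (Stirling.le_factorial_stirling k) (Stirling.le_factorial_stirling m)
      (by positivity) (by positivity)
  have hup := Stirling.factorial_le_exp_one_mul_sqrt_mul_pow (k + m) (by omega)
  push_cast at hup
  rw [hfac]
  refine (div_le_div₀ (by positivity) hup (by positivity) hlow).trans_eq ?_
  have h2π : (0 : ℝ) ≤ 2 * π := by positivity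
  rw [sqrt_mul h2π, sqrt_mul h2π, sqrt_div (by positivity), sqrt_mul (Nat.cast_nonneg k)]
  have hk' : (0 : ℝ) < √k := by positivity
  have hm' : (0 : ℝ) < √m := by positivity
  field_simp
  rw [div_pow, div_pow, div_pow, pow_add (exp 1), sq_sqrt h2π]
  field_simp

theorem Nat.cast_add_choose_mul_pow_mul_pow_le (k m : ℕ) (hk : k ≠ 0) (hm : m ≠ 0) {p q : ℝ}
    (hp : 0 ≤ p) (hq : 0 ≤ q) (hpq : p + q = 1) :
    (k + m).choose k * p ^ k * q ^ m ≤ exp 1 / (2 * π) * √((k + m) / (k * m)) := by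
  have hkm : (0 : ℝ) < k ^ k * m ^ m := by positivity
  calc (k + m).choose k * p ^ k * q ^ m
      ≤ exp 1 / (2 * π) * √((k + m) / (k * m)) * ((k + m) ^ (k + m) / (k ^ k * m ^ m)) *
          (p ^ k * q ^ m) := by
        rw [mul_assoc]; gcongr; exact Nat.cast_add_choose_le k m hk hm
    _ ≤ exp 1 / (2 * π) * √((k + m) / (k * m)) := by
      rw [mul_assoc]
      refine mul_le_of_le_one_right (by positivity) ?_
      rw [div_mul_eq_mul_div, div_le_one hkm, mul_comm]
      exact pow_mul_pow_le_of_add_eq_one k m hp hq hpq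

theorem sum_choose_mul_pow_mul_one_sub_pow (N : ℕ) (p : ℝ) :
    ∑ k ∈ range (N + 1), (N.choose k : ℝ) * p ^ k * (1 - p) ^ (N - k) = 1 := by
  calc ∑ k ∈ range (N + 1), (N.choose k : ℝ) * p ^ k * (1 - p) ^ (N - k)
      = ∑ k ∈ range (N + 1), p ^ k * (1 - p) ^ (N - k) * N.choose k :=
        sum_congr rfl fun k _ => by ring
    _ = 1 := by rw [← add_pow, add_sub_cancel, one_pow]

theorem sum_sq_mul_choose_mul_pow_mul_one_sub_pow (N : ℕ) (p : ℝ) :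
    ∑ k ∈ range (N + 1), (N * p - k) ^ 2 * (N.choose k * p ^ k * (1 - p) ^ (N - k)) =
      N * p * (1 - p) := by
  have h := congrArg (Polynomial.eval p) (bernsteinPolynomial.variance ℝ N)
  simpa [Polynomial.eval_finsetSum, bernsteinPolynomial, mul_assoc] using h

theorem choose_mul_pow_mul_one_sub_pow_le_two_div_sqrt_of_le_abs {N : ℕ} (hN : 0 < N) {p : ℝ}
    (hp : p ∈ Set.Ioo (0 : ℝ) 1) {k : ℕ} (hk : k ≤ N)
    (hfar : N * p * (1 - p) / 2 ≤ |N * p - k|) :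
    N.choose k * p ^ k * (1 - p) ^ (N - k) ≤ 2 / √(N * p * (1 - p)) := by
  obtain ⟨hp0, hp1⟩ := hp
  have hv : 0 < (N : ℝ) * p * (1 - p) := mul_pos (by positivity) (sub_pos.2 hp1)
  have hterm_nonneg (j : ℕ) : 0 ≤ (N.choose j : ℝ) * p ^ j * (1 - p) ^ (N - j) := by
    have : 0 ≤ 1 - p := by linarith
    positivity
  have hk_mem : k ∈ range (N + 1) := mem_range.2 (by omega)
  have hb1 : (N.choose k : ℝ) * p ^ k * (1 - p) ^ (N - k) ≤ 1 :=
    (single_le_sum (fun j _ => hterm_nonneg j) hk_mem).trans_eq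
      (sum_choose_mul_pow_mul_one_sub_pow N p)
  have hcheb : (N * p - k) ^ 2 * (N.choose k * p ^ k * (1 - p) ^ (N - k)) ≤ N * p * (1 - p) :=
    (single_le_sum (f := fun j : ℕ => (N * p - j) ^ 2 * (N.choose j * p ^ j * (1 - p) ^ (N - j)))
      (fun j _ => mul_nonneg (sq_nonneg _) (hterm_nonneg j)) hk_mem).trans_eq
      (sum_sq_mul_choose_mul_pow_mul_one_sub_pow N p)
  have hdev : (N * p * (1 - p) / 2) ^ 2 ≤ (N * p - k) ^ 2 :=
    sq_abs (N * p - k : ℝ) ▸ pow_le_pow_left₀ (by positivity) hfar 2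
  have hsq : ((N.choose k : ℝ) * p ^ k * (1 - p) ^ (N - k)) ^ 2 ≤ 4 / (N * p * (1 - p)) := by
    rw [le_div_iff₀ hv]
    nlinarith [hterm_nonneg k]
  calc (N.choose k : ℝ) * p ^ k * (1 - p) ^ (N - k) ≤ √(4 / (N * p * (1 - p))) :=
        le_sqrt_of_sq_le hsq
    _ = 2 / √(N * p * (1 - p)) := by
      rw [sqrt_div zero_le_four, show (4 : ℝ) = 2 ^ 2 by norm_num, sqrt_sq zero_le_two]

theorem choose_mul_pow_mul_one_sub_pow_le_two_div_sqrt_of_abs_lt {N : ℕ} (hN : 0 < N) {p : ℝ}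
    (hp : p ∈ Set.Ioo (0 : ℝ) 1) {k : ℕ} (hk : k ≤ N)
    (hnear : |N * p - k| < N * p * (1 - p) / 2) :
    N.choose k * p ^ k * (1 - p) ^ (N - k) ≤ 2 / √(N * p * (1 - p)) := by
  obtain ⟨hp0, hp1⟩ := hp
  have hq0 : 0 < 1 - p := by linarith
  obtain ⟨m, rfl⟩ : ∃ m, N = k + m := ⟨N - k, by omega⟩
  rw [Nat.add_sub_cancel_left]
  push_cast at hnear ⊢
  have hN' : (0 : ℝ) < k + m := by exact_mod_cast hN
  have hv : 0 < (k + m : ℝ) * p * (1 - p) := by positivity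
  obtain ⟨hlo, hhi⟩ := abs_lt.1 hnear
  have hk : (k + m) * p / 2 < k := by nlinarith
  have hm : (k + m) * (1 - p) / 2 < m := by nlinarith
  have hk0 : k ≠ 0 := (Nat.cast_pos.1 ((div_pos (mul_pos hN' hp0) two_pos).trans hk)).ne'
  have hm0 : m ≠ 0 := (Nat.cast_pos.1 ((div_pos (mul_pos hN' hq0) two_pos).trans hm)).ne'
  have hkm : (k + m) * p / 2 * ((k + m) * (1 - p) / 2) ≤ k * m :=
    mul_le_mul hk.le hm.le (by positivity) (Nat.cast_nonneg k)
  calc (k + m).choose k * p ^ k * (1 - p) ^ m ≤ exp 1 / (2 * π) * √((k + m) / (k * m)) :=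
        Nat.cast_add_choose_mul_pow_mul_pow_le k m hk0 hm0 hp0.le hq0.le (by ring)
    _ ≤ exp 1 / (2 * π) * √(4 / ((k + m) * p * (1 - p))) := by
      gcongr exp 1 / (2 * π) * √?_
      rw [div_le_div_iff₀ (by positivity) hv]
      nlinarith
    _ = exp 1 / π / √((k + m) * p * (1 - p)) := by
      rw [sqrt_div zero_le_four, show (4 : ℝ) = 2 ^ 2 by norm_num, sqrt_sq zero_le_two]
      field_simp
    _ ≤ 2 / √((k + m) * p * (1 - p)) := by
      gcongr
      rw [div_le_iff₀ pi_pos]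
      linarith [exp_one_lt_d9, pi_gt_three]

theorem choose_mul_pow_mul_one_sub_pow_le_two_div_sqrt {N : ℕ} (hN : 0 < N) {p : ℝ}
    (hp : p ∈ Set.Ioo (0 : ℝ) 1) {k : ℕ} (hk : k ≤ N) :
    N.choose k * p ^ k * (1 - p) ^ (N - k) ≤ 2 / √(N * p * (1 - p)) := by
  rcases le_or_gt (N * p * (1 - p) / 2) |N * p - k| with hfar | hnear
  · exact choose_mul_pow_mul_one_sub_pow_le_two_div_sqrt_of_le_abs hN hp hk hfar
  · exact choose_mul_pow_mul_one_sub_pow_le_two_div_sqrt_of_abs_lt hN hp hk hnear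

theorem IsAntichain.sum_le_of_choose_mul_le {α 𝕜 : Type*} [Fintype α] [Field 𝕜]
    [LinearOrder 𝕜] [IsStrictOrderedRing 𝕜] {𝒜 : Finset (Finset α)}
    (h𝒜 : IsAntichain (· ⊆ ·) (𝒜 : Set (Finset α))) {w : ℕ → 𝕜} {M : 𝕜} (hM : 0 ≤ M)
    (hw : ∀ r ≤ Fintype.card α, (Fintype.card α).choose r * w r ≤ M) :
    ∑ s ∈ 𝒜, w #s ≤ M :=
  calc ∑ s ∈ 𝒜, w #s ≤ ∑ s ∈ 𝒜, ((Fintype.card α).choose #s : 𝕜)⁻¹ * M :=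
        sum_le_sum fun s _ => by
          have hc : (0 : 𝕜) < (Fintype.card α).choose #s := by
            exact_mod_cast Nat.choose_pos (card_le_univ s)
          rw [inv_mul_eq_div, le_div_iff₀' hc]
          exact hw _ (card_le_univ s)
    _ = (∑ s ∈ 𝒜, ((Fintype.card α).choose #s : 𝕜)⁻¹) * M := (sum_mul ..).symm
    _ ≤ M := mul_le_of_le_one_left hM (lubell_yamamoto_meshalkin_inequality_sum_inv_choose h𝒜)

def finsetOfBoolFun (α : Type*) [Fintype α] : (α → Bool) ↪o Finset α :=
  OrderEmbedding.ofMapLEIff (fun η => univ.filter (η · = true)) fun η η' => by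
    simp [subset_iff, Pi.le_def, Bool.le_iff_imp]

/-- Probabilistic Sperner estimate: for iid Bernoulli(p) variables, the probability
of an antichain `A ⊆ {0,1}^N` is at most `2√2 / (√(p(1-p)) √N)`. -/
theorem antichain_prob_le (N : ℕ) (hN : 0 < N) (p : ℝ) (hp : p ∈ Set.Ioo (0:ℝ) 1)
    (A : Finset (Fin N → Bool))
    (hA : IsAntichain (· ≤ ·) (A : Set (Fin N → Bool))) :
    ∑ η ∈ A,
        p ^ (Finset.univ.filter (fun j => η j = true)).card *
          (1 - p) ^ (N - (Finset.univ.filter (fun j => η j = true)).card)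
      ≤ 2 * Real.sqrt 2 / (Real.sqrt (p * (1 - p)) * Real.sqrt N) := by
  have hv : √(p * (1 - p)) * √N = √(N * p * (1 - p)) := by
    rw [← sqrt_mul (mul_pos hp.1 (sub_pos.2 hp.2)).le, mul_comm, mul_assoc]
  calc ∑ η ∈ A, p ^ #(univ.filter (η · = true)) *
          (1 - p) ^ (N - #(univ.filter (η · = true)))
      = ∑ s ∈ A.map (finsetOfBoolFun (Fin N)).toEmbedding, p ^ #s * (1 - p) ^ (N - #s) := by
        rw [sum_map]; rfl
    _ ≤ 2 / √(N * p * (1 - p)) := by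
      refine IsAntichain.sum_le_of_choose_mul_le (w := fun r ↦ p ^ r * (1 - p) ^ (N - r)) ?_ ?_
        fun r hr => ?_
      · rw [coe_map]
        exact hA.image_embedding _
      · positivity
      · rw [Fintype.card_fin] at hr ⊢
        simpa only [mul_assoc] using choose_mul_pow_mul_one_sub_pow_le_two_div_sqrt hN hp hr
    _ ≤ 2 * √2 / (√(p * (1 - p)) * √N) := by
      rw [hv]
      gcongr
      exact le_mul_of_one_le_right zero_le_two (one_le_sqrt.2 one_le_two)
end
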